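/- Fix j ≥ 1 and 0 ≤ i ≤ p − 1, and let ψ : ℓ_{pj+i} → B₁/F^{pj}B₁ be the composite of the inclusion ℓ_{pj+i} ⊆ B₁ with the quotient map. Then the kernel of ψ equals the span of the monomials of B₁ not involving τ̄_2 whose weight w satisfies p²j ≤ w ≤ p²j + pi; that is, ker ψ = ⊕_{k=0}^{i} M_2(pj + k), where M_2(pj+k) is the span of the τ̄_2-free monomials of weight exactly p(pj+k). In particular no monomial of ker ψ involves τ̄_2. -/

import Mathlib

/-- A monomial of `B n = F_p[ζ₁, ζ₂, …] ⊗ Λ(τ̄_{n+1}, τ̄_{n+2}, …)`: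
`e k` is the exponent of `ζ_k` (with `e 0 = 0`, i.e. no `ζ₀`), and
`t` is the set of indices `m` of the exterior generators `τ̄_m` occurring
(all of which satisfy `m ≥ n + 1`). -/
structure Mono (n : ℕ) where
  e : ℕ →₀ ℕ
  t : Finset ℕ
  he : e 0 = 0
  ht : ∀ m ∈ t, n + 1 ≤ m

/-- `B p n` models `A//E(n)_* = F_p[ζ₁, ζ₂, …] ⊗ Λ(τ̄_{n+1}, …)` as the free
`F_p`-vector space on its monomial basis. -/
abbrev B (p n : ℕ) : Type := Mono n →₀ ZMod p

namespace Mono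

variable {n : ℕ}

/-- Internal (topological) degree of a monomial: `deg ζ_k = 2(p^k − 1)`,
`deg τ̄_m = 2p^m − 1`. -/
def deg (p : ℕ) (x : Mono n) : ℕ :=
  x.e.sum (fun k a => a * (2 * (p ^ k - 1))) + ∑ m ∈ x.t, (2 * p ^ m - 1)

/-- Weight of a monomial: `wt ζ_k = wt τ̄_k = p^k`, extended additively. -/
def wt (p : ℕ) (x : Mono n) : ℕ :=
  x.e.sum (fun k a => a * p ^ k) + ∑ m ∈ x.t, p ^ m

/-- Length of a monomial: the number of exterior factors `τ̄_m` occurring in it. -/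
def len (x : Mono n) : ℕ := x.t.card

end Mono

/-- The monomial obtained from `x` by the Milnor operation `Q_r` acting on the
exterior factor `τ̄_m`: remove `τ̄_m` and multiply by `ζ_{m−r}^{p^r}`
(with the convention `ζ₀ = 1`, i.e. if `m ≤ r` nothing is added). -/
noncomputable def Qtarget (p r : ℕ) {n : ℕ} (x : Mono n) (m : ℕ) : Mono n where
  e := if r < m then x.e + Finsupp.single (m - r) (p ^ r) else x.e
  t := x.t.erase m
  he := by
    by_cases h : r < m
    · simp [if_pos h, Finsupp.single_apply, x.he, Nat.sub_ne_zero_of_lt h]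
    · simp [if_neg h, x.he]
  ht := fun m' hm' => x.ht m' (Finset.mem_of_mem_erase hm')

/-- Value of the Milnor operation `Q_r` on a basis monomial: the signed sum over the
exterior factors `τ̄_m` of `x`, the sign being the Koszul sign `(−1)^{#{m' ∈ t, m' < m}}`. -/
noncomputable def Qmono (p r : ℕ) {n : ℕ} (x : Mono n) : B p n :=
  ∑ m ∈ x.t, ((-1 : ZMod p) ^ ((x.t.filter (fun m' => m' < m)).card)) •
    Finsupp.single (Qtarget p r x m) (1 : ZMod p)

/-- The Milnor operation `Q_r : B_n → B_n`, the unique graded derivation with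
`Q_r ζ_k = 0` and `Q_r τ̄_m = ζ_{m−r}^{p^r}`. -/
noncomputable def Qop (p n r : ℕ) : B p n →ₗ[ZMod p] B p n :=
  Finsupp.lsum (ZMod p) fun x => LinearMap.toSpanSingleton (ZMod p) (B p n) (Qmono p r x)

/-- The span of the set of monomials satisfying a predicate `P`. -/
noncomputable def monSpan (p n : ℕ) (P : Mono n → Prop) : Submodule (ZMod p) (B p n) :=
  Submodule.span (ZMod p) ((fun x => Finsupp.single x (1 : ZMod p)) '' {x | P x})

/-- The weight of the `τ̄₂`-free part of a monomial of `B₁`: writing a monomial uniquely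
as `m τ̄₂^ε` with `m` not involving `τ̄₂`, this is `wt m`. -/
def Mono.wtF (p : ℕ) {n : ℕ} (x : Mono n) : ℕ :=
  x.e.sum (fun k a => a * p ^ k) + ∑ m ∈ x.t.erase 2, p ^ m

/-- The filtration `F^a B₁`: the span of the monomials `m τ̄₂^ε` with `wt m ≥ pa`. -/
noncomputable def FSub (p a : ℕ) : Submodule (ZMod p) (B p 1) := monSpan p 1 (fun x => p * a ≤ x.wtF p)

/-- The Brown–Gitler comodule `ℓ_c ⊆ B₁`: the span of the monomials of weight `≤ pc`. -/
noncomputable def lSub (p c : ℕ) : Submodule (ZMod p) (B p 1) := monSpan p 1 (fun x => x.wt p ≤ p * c)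

/-- `M₂(a)` viewed inside `B₁`: the span of the `τ̄₂`-free monomials of weight
exactly `pa`. -/
noncomputable def M2sub (p a : ℕ) : Submodule (ZMod p) (B p 1) :=
  monSpan p 1 (fun x => 2 ∉ x.t ∧ x.wt p = p * a)

/-- The composite `ψ : ℓ_{pj+i} ⊆ B₁ ↠ B₁/F^{pj}B₁` of the inclusion and the
projection. -/
noncomputable def psiMap (p j i : ℕ) :
    lSub p (p * j + i) →ₗ[ZMod p] (B p 1 ⧸ FSub p (p * j)) :=
  (FSub p (p * j)).mkQ ∘ₗ (lSub p (p * j + i)).subtype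

lemma mem_monSpan {p n : ℕ} {P : Mono n → Prop} {f : B p n} :
    f ∈ monSpan p n P ↔ ∀ x ∈ f.support, P x := by
  rw [monSpan, ← Finsupp.supported_eq_span_single, Finsupp.mem_supported]
  rfl

lemma monSpan_congr {p n : ℕ} {P Q : Mono n → Prop} (h : ∀ x, P x ↔ Q x) :
    monSpan p n P = monSpan p n Q :=
  congrArg (monSpan p n) (funext fun x => propext (h x))

lemma monSpan_exists_eq_iSup {p n : ℕ} {ι : Type*} (s : Set ι) (P : ι → Mono n → Prop) :
    monSpan p n (fun x => ∃ k ∈ s, P k x) = ⨆ k ∈ s, monSpan p n (P k) := by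
  have hset : {x | ∃ k ∈ s, P k x} = ⋃ k ∈ s, {x | P k x} := by
    ext x; simp
  rw [monSpan, hset, Set.image_iUnion₂]
  exact Submodule.span_iUnion₂ _

namespace Mono

variable {n : ℕ}

lemma dvd_wt (p : ℕ) (x : Mono n) : p ∣ x.wt p := by
  refine dvd_add (Finset.dvd_sum fun k hk => ?_) (Finset.dvd_sum fun m hm => ?_)
  · have hk0 : k ≠ 0 := by
      rintro rfl
      exact Finsupp.mem_support_iff.mp hk x.he
    exact (dvd_pow_self p hk0).mul_left _
  · exact dvd_pow_self p (by have := x.ht m hm; omega)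

lemma wtF_eq_wt {p : ℕ} {x : Mono n} (h : 2 ∉ x.t) : x.wtF p = x.wt p := by
  rw [wtF, wt, Finset.erase_eq_of_notMem h]

lemma wtF_add_sq_eq_wt {p : ℕ} {x : Mono n} (h : 2 ∈ x.t) : x.wtF p + p ^ 2 = x.wt p := by
  rw [wtF, wt, ← Finset.sum_erase_add x.t _ h, add_assoc]

/-- Inside `ℓ_{pj+i}` with `i < p`, a factor `τ̄₂` (of weight `p²`) cannot coexist with a
`τ̄₂`-free part of weight `≥ p²j`. -/
lemma le_wtF_iff {p j i : ℕ} (hp : 0 < p) (hi : i < p) {x : Mono n}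
    (hx : x.wt p ≤ p * (p * j + i)) :
    p * (p * j) ≤ x.wtF p ↔
      2 ∉ x.t ∧ p ^ 2 * j ≤ x.wt p ∧ x.wt p ≤ p ^ 2 * j + p * i := by
  have hpi : p * i < p ^ 2 := by nlinarith
  by_cases h2 : 2 ∈ x.t
  · have := wtF_add_sq_eq_wt (p := p) h2
    simp only [h2, not_true_eq_false, false_and, iff_false, not_le]
    nlinarith
  · rw [wtF_eq_wt h2]
    simp only [h2, not_false_eq_true, true_and]
    exact ⟨fun h => ⟨by nlinarith, by nlinarith⟩, fun h => by nlinarith⟩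

lemma le_wt_and_wt_le_iff {p a i : ℕ} (hp : 0 < p) (x : Mono n) :
    (p * a ≤ x.wt p ∧ x.wt p ≤ p * a + p * i) ↔ ∃ k ≤ i, x.wt p = p * (a + k) := by
  obtain ⟨w, hw⟩ := dvd_wt p x
  rw [hw, ← mul_add]
  simp only [Nat.mul_le_mul_left_iff hp, Nat.mul_right_inj hp.ne']
  constructor
  · rintro ⟨hlo, hhi⟩
    exact ⟨w - a, by omega, by omega⟩
  · rintro ⟨k, hk, rfl⟩
    omega

end Mono

lemma ker_psiMap (p j i : ℕ) :
    LinearMap.ker (psiMap p j i) =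
      Submodule.comap (lSub p (p * j + i)).subtype (FSub p (p * j)) := by
  rw [psiMap, LinearMap.ker_comp, Submodule.ker_mkQ]

theorem kernel_of_psi (p : ℕ) (hp : p.Prime)
    (j : ℕ) (i : ℕ) (hi : i ≤ p - 1) :
    LinearMap.ker (psiMap p j i) =
      Submodule.comap (lSub p (p * j + i)).subtype
        (monSpan p 1 (fun x =>
          2 ∉ x.t ∧ p ^ 2 * j ≤ x.wt p ∧ x.wt p ≤ p ^ 2 * j + p * i)) ∧
    monSpan p 1 (fun x => 2 ∉ x.t ∧ p ^ 2 * j ≤ x.wt p ∧ x.wt p ≤ p ^ 2 * j + p * i) =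
      ⨆ k ∈ Set.Iic i, M2sub p (p * j + k) := by
  have hp0 : 0 < p := hp.pos
  have hsq : p ^ 2 * j = p * (p * j) := by ring
  refine ⟨?_, ?_⟩
  · rw [ker_psiMap]
    ext f
    simp only [Submodule.mem_comap, Submodule.coe_subtype, FSub, mem_monSpan]
    have hf : ∀ x ∈ (f : B p 1).support, x.wt p ≤ p * (p * j + i) := mem_monSpan.mp f.2
    exact forall₂_congr fun x hx => Mono.le_wtF_iff hp0 (by omega) (hf x hx)
  · simp only [M2sub]
    rw [← monSpan_exists_eq_iSup]
    refine monSpan_congr fun x => ?_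
    rw [hsq, Mono.le_wt_and_wt_le_iff hp0]
    simp only [Set.mem_Iic, ← exists_and_left, and_left_comm]
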